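/- arXiv:1710.08755 — 2 statements merged into one kernel-verified Lean document; each statement's English description precedes it below -/
import Mathlib

section
/- Assuming countable choice: a function F : ℕ^ℕ → ℕ is realisable (realised by some Brouwer-operation) if and only if there exists a Brouwer-operation γ ∈ K such that F is constant on the basic open set of every a ∈ bar(γ), i.e., for all a ∈ bar(γ) and all α, β extending a, F(α) = F(β). -/
/-- Initial segment of `α` of length `n`. -/
def seg (α : ℕ → ℕ) (n : ℕ) : List ℕ := List.ofFn (fun i : Fin n => α i)

/-- `a` followed by the constant zero sequence. -/
def zext (a : List ℕ) : ℕ → ℕ := fun i => a.getD i 0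

/-- Upward closure under extension. -/
def extU (U : Set (List ℕ)) : Set (List ℕ) := {a | ∃ b ∈ U, b <+: a}

/-- The cover of formal Baire space, generated by η, ζ, ϝ. -/
inductive Cover : List ℕ → Set (List ℕ) → Prop
  | eta {a : List ℕ} {U : Set (List ℕ)} : a ∈ U → Cover a U
  | zeta {a : List ℕ} {U : Set (List ℕ)} (k : ℕ) : Cover a U → Cover (a ++ [k]) U
  | digamma {a : List ℕ} {U : Set (List ℕ)} : (∀ n, Cover (a ++ [n]) U) → Cover a U

/-- A spread: a decidable tree where every node has a child. -/
def IsSpread (T : Set (List ℕ)) : Prop :=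
  (∀ a, a ∈ T ∨ a ∉ T) ∧ (∀ a b : List ℕ, a <+: b → b ∈ T → a ∈ T) ∧
  (∀ a ∈ T, ∃ n, a ++ [n] ∈ T)

/-- A fan: a finitely branching spread. -/
def IsFan (T : Set (List ℕ)) : Prop :=
  IsSpread T ∧ ∀ a ∈ T, ∃ N, ∀ n, a ++ [n] ∈ T → n ≤ N

/-- `α` is a path in the tree `T`. -/
def IsPath (T : Set (List ℕ)) (α : ℕ → ℕ) : Prop := ∀ n, seg α n ∈ T

/-- A c-bar: a c-set barring every sequence. -/
def IsCBar (P : Set (List ℕ)) : Prop :=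
  (∃ δ : List ℕ → ℕ, ∀ a, a ∈ P ↔ ∀ b, δ a = δ (a ++ b)) ∧
  (∀ α : ℕ → ℕ, ∃ n, seg α n ∈ P)

/-- Pointwise continuity for `F : ℕ^ℕ → ℕ`. -/
def PtwiseCts (F : (ℕ → ℕ) → ℕ) : Prop :=
  ∀ α : ℕ → ℕ, ∃ n, ∀ β : ℕ → ℕ, seg β n = seg α n → F β = F α

/-- An inductive subset of ℕ*. -/
def Inductive (Q : Set (List ℕ)) : Prop := ∀ a, (∀ n, a ++ [n] ∈ Q) → a ∈ Q

/-- Preimage of a subset of ℕ under a relation r ⊆ ℕ* × ℕ. -/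
def rInv (r : List ℕ → ℕ → Prop) (D : Set ℕ) : Set (List ℕ) := {a | ∃ n ∈ D, r a n}

/-- Formal topology map from formal Baire space to formal natural numbers. -/
def IsFTopMap (r : List ℕ → ℕ → Prop) : Prop :=
  Cover [] (rInv r Set.univ) ∧
  ∀ n m : ℕ, ∀ a ∈ extU (rInv r {n}) ∩ extU (rInv r {m}),
    Cover a (rInv r {l | l = n ∧ n = m})

/-- `F` is formally continuous: induced by a formal topology map on points. -/
def FormallyCts (F : (ℕ → ℕ) → ℕ) : Prop :=
  ∃ r : List ℕ → ℕ → Prop, IsFTopMap r ∧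
    ∀ α : ℕ → ℕ, {n | ∃ k, r (seg α k) n} = {F α}

/-- The class of Brouwer-operations. -/
inductive IsBrouwerOp : (List ℕ → ℕ) → Prop
  | const (n : ℕ) : IsBrouwerOp (fun _ => n + 1)
  | sup {γ : List ℕ → ℕ} : γ [] = 0 →
      (∀ n, IsBrouwerOp (fun a => γ (n :: a))) → IsBrouwerOp γ

/-- `bar γ`: minimal sequences on which `γ` is positive. -/
def barOf (γ : List ℕ → ℕ) : Set (List ℕ) :=
  {a | 0 < γ a ∧ ∀ b : List ℕ, b <+: a → b ≠ a → γ b = 0}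

/-- The set presentation `Cov` of formal Baire space. -/
inductive Cov : List ℕ → Set (List ℕ) → Prop
  | single (a : List ℕ) : Cov a {a}
  | union {a : List ℕ} {U : ℕ → Set (List ℕ)} :
      (∀ n, Cov (a ++ [n]) (U n)) → Cov a (⋃ n, U n)

/-!
A realiser `γ` of `F` is positive exactly on the extensions of the points of its bar, where it
stays constant; so `γ a - 1` is the common value of `F` on the extensions of any `a ∈ bar γ`.
Conversely, if `F` is constant on the basic opens of `bar γ`, induction on `γ ∈ K` builds a
realiser: when `γ ⟨⟩ = 0`, the induction hypothesis for `γ_n` realises `F (n :: ·)` for each `n`,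
and countable choice glues these realisers into one operation with value `0` at `⟨⟩`.
-/

def Realises (γ : List ℕ → ℕ) (F : (ℕ → ℕ) → ℕ) : Prop :=
  ∀ α : ℕ → ℕ, ∃ n, γ (seg α n) = F α + 1

def IsConstOnBar (γ : List ℕ → ℕ) (F : (ℕ → ℕ) → ℕ) : Prop :=
  ∀ a ∈ barOf γ, ∀ α β : ℕ → ℕ, seg α a.length = a → seg β a.length = a → F α = F β

def supOp (γs : ℕ → List ℕ → ℕ) : List ℕ → ℕ
  | [] => 0
  | n :: a => γs n a

def seqCons (n : ℕ) (α : ℕ → ℕ) : ℕ → ℕ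
  | 0 => n
  | i + 1 => α i

lemma seqCons_head_tail (α : ℕ → ℕ) : seqCons (α 0) (fun i => α (i + 1)) = α := by
  funext i
  cases i <;> rfl

lemma seg_succ_cons (n : ℕ) (α : ℕ → ℕ) (k : ℕ) :
    seg (seqCons n α) (k + 1) = n :: seg α k := by
  simp [seg, List.ofFn_succ, seqCons]

lemma seg_prefix_seg (α : ℕ → ℕ) {m n : ℕ} (h : m ≤ n) : seg α m <+: seg α n := by
  obtain ⟨k, rfl⟩ := Nat.exists_eq_add_of_le h
  exact ⟨seg (fun i => α (m + i)) k, by simp [seg, List.ofFn_add]⟩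

lemma IsBrouwerOp.eq_of_prefix {γ : List ℕ → ℕ} (hγ : IsBrouwerOp γ) {a b : List ℕ}
    (ha : γ a ≠ 0) (hab : a <+: b) : γ b = γ a := by
  induction hγ generalizing a b with
  | const n => rfl
  | sup h0 _ ih =>
    obtain ⟨t, rfl⟩ := hab
    cases a with
    | nil => exact absurd h0 ha
    | cons k a => exact ih k ha (List.prefix_append a t)

lemma isBrouwerOp_supOp {γs : ℕ → List ℕ → ℕ} (hγs : ∀ n, IsBrouwerOp (γs n)) :
    IsBrouwerOp (supOp γs) :=
  IsBrouwerOp.sup rfl hγs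

lemma cons_mem_barOf {γ : List ℕ → ℕ} (h0 : γ [] = 0) {n : ℕ} {b : List ℕ}
    (hb : b ∈ barOf (fun a => γ (n :: a))) : n :: b ∈ barOf γ := by
  refine ⟨hb.1, fun c hc hne => ?_⟩
  cases c with
  | nil => exact h0
  | cons m c =>
    obtain ⟨hmn, hcb⟩ := List.cons_prefix_cons.mp hc
    subst hmn
    exact hb.2 c hcb (fun h => hne (h ▸ rfl))

lemma IsConstOnBar.cons {γ : List ℕ → ℕ} {F : (ℕ → ℕ) → ℕ} (hF : IsConstOnBar γ F)
    (h0 : γ [] = 0) (n : ℕ) :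
    IsConstOnBar (fun a => γ (n :: a)) (fun α => F (seqCons n α)) := by
  intro b hb α β hα hβ
  refine hF (n :: b) (cons_mem_barOf h0 hb) _ _ ?_ ?_
  · rw [List.length_cons, seg_succ_cons, hα]
  · rw [List.length_cons, seg_succ_cons, hβ]

lemma Realises.supOp {γs : ℕ → List ℕ → ℕ} {F : (ℕ → ℕ) → ℕ}
    (hγs : ∀ n, Realises (γs n) (fun α => F (seqCons n α))) :
    Realises (supOp γs) F := by
  intro α
  obtain ⟨k, hk⟩ := hγs (α 0) (fun i => α (i + 1))
  refine ⟨k + 1, ?_⟩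
  rw [← seqCons_head_tail α, seg_succ_cons]
  exact hk

lemma Realises.apply_add_one_eq_of_mem_barOf {γ : List ℕ → ℕ} {F : (ℕ → ℕ) → ℕ}
    (hγ : IsBrouwerOp γ) (hF : Realises γ F) {a : List ℕ} (ha : a ∈ barOf γ) {α : ℕ → ℕ}
    (hα : seg α a.length = a) : F α + 1 = γ a := by
  obtain ⟨n, hn⟩ := hF α
  rcases le_total n a.length with h | h
  · have hpre : seg α n <+: a := hα ▸ seg_prefix_seg α h
    by_cases he : seg α n = a
    · rw [← he, hn]
    · have := ha.2 (seg α n) hpre he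
      omega
  · rw [← hn]
    exact hγ.eq_of_prefix ha.1.ne' (hα ▸ seg_prefix_seg α h)

lemma Realises.isConstOnBar {γ : List ℕ → ℕ} {F : (ℕ → ℕ) → ℕ} (hγ : IsBrouwerOp γ)
    (hF : Realises γ F) : IsConstOnBar γ F := by
  intro a ha α β hα hβ
  have hα' := hF.apply_add_one_eq_of_mem_barOf hγ ha hα
  have hβ' := hF.apply_add_one_eq_of_mem_barOf hγ ha hβ
  omega

lemma IsBrouwerOp.exists_realises_of_isConstOnBar {γ : List ℕ → ℕ} (hγ : IsBrouwerOp γ)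
    {F : (ℕ → ℕ) → ℕ} (hF : IsConstOnBar γ F) : ∃ γ', IsBrouwerOp γ' ∧ Realises γ' F := by
  induction hγ generalizing F with
  | const n =>
    have hnil : [] ∈ barOf (fun _ => n + 1) :=
      ⟨n.succ_pos, fun b hb hne => absurd (List.prefix_nil.mp hb) hne⟩
    refine ⟨fun _ => F (fun _ => 0) + 1, IsBrouwerOp.const _, fun α => ⟨0, ?_⟩⟩
    rw [hF [] hnil α (fun _ => 0) rfl rfl]
  | sup h0 _ ih =>
    choose γs hγs hrealises using fun n => ih n (hF.cons h0 n)
    exact ⟨supOp γs, isBrouwerOp_supOp hγs, Realises.supOp hrealises⟩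

theorem realisable_iff_constant_on_bar (F : (ℕ → ℕ) → ℕ) :
    (∃ γ : List ℕ → ℕ, IsBrouwerOp γ ∧ ∀ α : ℕ → ℕ, ∃ n, γ (seg α n) = F α + 1)
      ↔ ∃ γ : List ℕ → ℕ, IsBrouwerOp γ ∧
          ∀ a ∈ barOf γ, ∀ α β : ℕ → ℕ,
            seg α a.length = a → seg β a.length = a → F α = F β := by
  constructor
  · rintro ⟨γ, hγ, hF⟩
    exact ⟨γ, hγ, Realises.isConstOnBar hγ hF⟩
  · rintro ⟨γ, hγ, hF⟩
    exact hγ.exists_realises_of_isConstOnBar hF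
end

section
/- A function F : ℕ^ℕ → ℕ is formally continuous if and only if there exists U ∈ Cov(⟨⟩) such that F is constant on the basic open set of each a ∈ U, i.e., for all a ∈ U and all α, β extending a, F(α) = F(β). -/
def ConstOnBasicOpen (F : (ℕ → ℕ) → ℕ) (a : List ℕ) : Prop :=
  ∀ α β : ℕ → ℕ, seg α a.length = a → seg β a.length = a → F α = F β

lemma seg_length (α : ℕ → ℕ) (n : ℕ) : (seg α n).length = n := by simp [seg]

lemma seg_zext (a : List ℕ) : seg (zext a) a.length = a := by
  apply List.ext_getElem <;> simp [seg, zext]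

lemma seg_succ (α : ℕ → ℕ) (n : ℕ) : seg α (n + 1) = seg α n ++ [α n] := by
  simp only [seg, List.ofFn_succ', List.concat_eq_append]
  rfl

lemma seg_eq_of_prefix {α : ℕ → ℕ} {a b : List ℕ} (h : b <+: a) (ha : seg α a.length = a) :
    seg α b.length = b := by
  rw [List.prefix_iff_eq_take.mp h, ← ha]
  apply List.ext_getElem <;> simp [seg, List.getElem_take]

lemma extU_mono {U V : Set (List ℕ)} (h : U ⊆ V) : extU U ⊆ extU V := by
  rintro a ⟨b, hb, hba⟩
  exact ⟨b, h hb, hba⟩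

lemma extU_extU (V : Set (List ℕ)) : extU (extU V) ⊆ extU V := by
  rintro a ⟨b, ⟨c, hc, hcb⟩, hba⟩
  exact ⟨c, hc, hcb.trans hba⟩

namespace Cover

lemma mono {a : List ℕ} {U V : Set (List ℕ)} (h : Cover a U) (hUV : U ⊆ V) : Cover a V := by
  induction h with
  | eta h => exact eta (hUV h)
  | zeta k _ ih => exact zeta k (ih hUV)
  | digamma _ ih => exact digamma fun n => ih n hUV

lemma of_prefix_mem {U : Set (List ℕ)} {a b : List ℕ} (hb : b ∈ U) (h : b <+: a) :
    Cover a U := by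
  obtain ⟨t, rfl⟩ := h
  induction t using List.reverseRecOn with
  | nil => simpa using eta hb
  | append_singleton t k ih => rw [← List.append_assoc]; exact zeta k ih

end Cover

namespace Cov

lemma cover {a : List ℕ} {U : Set (List ℕ)} (h : Cov a U) : Cover a U := by
  induction h with
  | single a => exact Cover.eta rfl
  | union _ ih => exact Cover.digamma fun n => (ih n).mono (Set.subset_iUnion _ n)

lemma exists_seg_mem {a : List ℕ} {U : Set (List ℕ)} (h : Cov a U) {α : ℕ → ℕ}
    (hα : seg α a.length = a) : ∃ k, seg α k ∈ U := by
  induction h with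
  | single a => exact ⟨a.length, hα⟩
  | @union a V _ ih =>
      have hseg : seg α (a ++ [α a.length]).length = a ++ [α a.length] := by
        rw [List.length_append, List.length_singleton, seg_succ, hα]
      obtain ⟨k, hk⟩ := ih (α a.length) hseg
      exact ⟨k, Set.mem_iUnion.mpr ⟨_, hk⟩⟩

-- `Cov` has no counterpart of the ζ-rule of `Cover`; this lemma stands in for it.
lemma exists_of_prefix {a : List ℕ} {U : Set (List ℕ)} (h : Cov a U) {b : List ℕ}
    (hab : a <+: b) : ∃ V, Cov b V ∧ V ⊆ extU U := by
  induction h generalizing b with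
  | single a => exact ⟨{b}, single b, fun x hx => ⟨a, rfl, hx ▸ hab⟩⟩
  | @union a V _ ih =>
      obtain ⟨t, rfl⟩ := hab
      cases t with
      | nil =>
          choose W hW hWV using fun n => ih n (List.prefix_refl (a ++ [n]))
          refine ⟨⋃ n, W n, union (by simpa using hW), Set.iUnion_subset fun n => ?_⟩
          exact (hWV n).trans (extU_mono (Set.subset_iUnion _ n))
      | cons n t =>
          obtain ⟨W, hW, hWV⟩ := ih n (b := a ++ n :: t) ⟨t, by simp⟩
          exact ⟨W, hW, hWV.trans (extU_mono (Set.subset_iUnion _ n))⟩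

end Cov

lemma Cover.exists_cov {a : List ℕ} {U : Set (List ℕ)} (h : Cover a U) :
    ∃ V, Cov a V ∧ V ⊆ extU U := by
  induction h with
  | @eta a _ ha => exact ⟨{a}, Cov.single a, fun x hx => ⟨a, ha, hx ▸ List.prefix_refl _⟩⟩
  | @zeta a _ k _ ih =>
      obtain ⟨V, hV, hVU⟩ := ih
      obtain ⟨W, hW, hWV⟩ := hV.exists_of_prefix ⟨[k], rfl⟩
      exact ⟨W, hW, hWV.trans ((extU_mono hVU).trans (extU_extU _))⟩
  | digamma _ ih =>
      choose W hW hWU using ih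
      exact ⟨⋃ n, W n, Cov.union hW, Set.iUnion_subset hWU⟩

lemma FormallyCts.exists_cov {F : (ℕ → ℕ) → ℕ} (hF : FormallyCts F) :
    ∃ U : Set (List ℕ), Cov [] U ∧ ∀ a ∈ U, ConstOnBasicOpen F a := by
  obtain ⟨r, ⟨hr, -⟩, hrF⟩ := hF
  obtain ⟨U, hU, hUr⟩ := hr.exists_cov
  refine ⟨U, hU, fun a ha α β hα hβ => ?_⟩
  obtain ⟨b, ⟨n, -, hbn⟩, hba⟩ := hUr ha
  have hF_eq : ∀ γ : ℕ → ℕ, seg γ a.length = a → F γ = n := by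
    intro γ hγ
    have hn : n ∈ {m | ∃ k, r (seg γ k) m} := ⟨b.length, by rwa [seg_eq_of_prefix hba hγ]⟩
    rw [hrF γ] at hn
    exact hn.symm
  rw [hF_eq α hα, hF_eq β hβ]

section OfCov

variable {F : (ℕ → ℕ) → ℕ} {U : Set (List ℕ)}

def covRel (F : (ℕ → ℕ) → ℕ) (U : Set (List ℕ)) (a : List ℕ) (n : ℕ) : Prop :=
  a ∈ U ∧ F (zext a) = n

lemma eq_zext_of_seg_mem (hFU : ∀ a ∈ U, ConstOnBasicOpen F a) {α : ℕ → ℕ} {k : ℕ}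
    (hk : seg α k ∈ U) : F α = F (zext (seg α k)) :=
  hFU _ hk α _ (by rw [seg_length]) (seg_zext _)

lemma isFTopMap_covRel (hFU : ∀ a ∈ U, ConstOnBasicOpen F a) (hU : Cov [] U) :
    IsFTopMap (covRel F U) := by
  refine ⟨hU.cover.mono fun a ha => ⟨_, trivial, ha, rfl⟩, ?_⟩
  rintro n m a ⟨⟨b, ⟨_, hbn, hbU, rfl⟩, hba⟩, ⟨c, ⟨_, hcm, hcU, rfl⟩, hca⟩⟩
  have hnm : n = m := by
    rw [← Set.mem_singleton_iff.mp hbn, ← Set.mem_singleton_iff.mp hcm]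
    rcases List.prefix_or_prefix_of_prefix hba hca with hbc | hcb
    · exact hFU b hbU _ _ (seg_zext b) (seg_eq_of_prefix hbc (seg_zext c))
    · exact (hFU c hcU _ _ (seg_zext c) (seg_eq_of_prefix hcb (seg_zext b))).symm
  exact Cover.of_prefix_mem ⟨n, ⟨rfl, hnm⟩, hbU, hbn⟩ hba

lemma covRel_seg (hFU : ∀ a ∈ U, ConstOnBasicOpen F a) (hU : Cov [] U) (α : ℕ → ℕ) :
    {n | ∃ k, covRel F U (seg α k) n} = {F α} := by
  ext n
  constructor
  · rintro ⟨k, hk, rfl⟩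
    exact (eq_zext_of_seg_mem hFU hk).symm
  · rintro rfl
    obtain ⟨k, hk⟩ := hU.exists_seg_mem (α := α) rfl
    exact ⟨k, hk, (eq_zext_of_seg_mem hFU hk).symm⟩

end OfCov

theorem formallyCts_iff_cov (F : (ℕ → ℕ) → ℕ) :
    FormallyCts F ↔
      ∃ U : Set (List ℕ), Cov [] U ∧
        ∀ a ∈ U, ∀ α β : ℕ → ℕ,
          seg α a.length = a → seg β a.length = a → F α = F β := by
  refine ⟨FormallyCts.exists_cov, ?_⟩
  rintro ⟨U, hU, hFU⟩
  exact ⟨covRel F U, isFTopMap_covRel hFU hU, covRel_seg hFU hU⟩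
end
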